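/- arXiv:1508.02198 — 5 statements merged into one kernel-verified Lean document; each statement's English description precedes it below -/
import Mathlib

section
/- Let α > 2, s > 0, and set δ = 2/α. Then the function x ↦ 1 − 1/(1 + s·‖x‖^(−α)) = s/(‖x‖^α + s) is Lebesgue integrable on ℝ² and ∫_{ℝ²} s/(‖x‖^α + s) dx = π·C(δ)·s^δ, where C(δ) = πδ/sin(πδ). -/
open MeasureTheory Set Real

/-!
In polar coordinates the integral is `2π ∫₀^∞ r · s / (r^α + s) dr`. The substitution `u = r^α / s`
turns this into `(2π / α) s^δ ∫₀^∞ u^(δ-1) / (1 + u) du`, and `v = u / (1 + u)` identifies the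
last integral with the Beta integral `B(δ, 1 - δ) = Γ(δ) Γ(1 - δ) = π / sin(πδ)`.
None of these changes of variables needs integrability, and a non-integrable function has Bochner
integral `0`; so integrability follows from the value being positive.
-/

theorem integral_rpow_mul_one_sub_rpow {a b : ℝ} (ha : 0 < a) (hb : 0 < b) :
    ∫ t in (0:ℝ)..1, t ^ (a - 1) * (1 - t) ^ (b - 1) = Gamma a * Gamma b / Gamma (a + b) := by
  have hbeta : Complex.betaIntegral a b =
      ((∫ t in (0:ℝ)..1, t ^ (a - 1) * (1 - t) ^ (b - 1) : ℝ) : ℂ) := by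
    rw [Complex.betaIntegral, ← intervalIntegral.integral_ofReal]
    refine intervalIntegral.integral_congr fun t ht => ?_
    rw [uIcc_of_le zero_le_one] at ht
    rw [Complex.ofReal_mul, Complex.ofReal_cpow ht.1, Complex.ofReal_cpow (sub_nonneg.2 ht.2)]
    push_cast
    rfl
  have h := Complex.Gamma_mul_Gamma_eq_betaIntegral (s := a) (t := b) (by simpa) (by simpa)
  rw [hbeta, ← Complex.ofReal_add, Complex.Gamma_ofReal, Complex.Gamma_ofReal,
    Complex.Gamma_ofReal] at h
  rw [eq_div_iff (Gamma_pos_of_pos (add_pos ha hb)).ne', mul_comm]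
  exact_mod_cast h.symm

theorem integral_Ioi_eq_integral_Ioo_div_one_sub {E : Type*} [NormedAddCommGroup E]
    [NormedSpace ℝ E] (g : ℝ → E) :
    ∫ v in Ioi (0:ℝ), g v = ∫ t in Ioo (0:ℝ) 1, ((1 - t) ^ 2)⁻¹ • g (t / (1 - t)) := by
  have hderiv : ∀ t ∈ Ioo (0:ℝ) 1,
      HasDerivWithinAt (fun t => t / (1 - t)) ((1 - t) ^ 2)⁻¹ (Ioo 0 1) t := by
    intro t ht
    have h1t : 1 - t ≠ 0 := by linarith [ht.2]
    have hd : HasDerivAt (fun t => t / (1 - t)) ((1 * (1 - t) - t * -1) / (1 - t) ^ 2) t :=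
      (hasDerivAt_id' t).div ((hasDerivAt_id' t).const_sub 1) h1t
    refine hd.hasDerivWithinAt.congr_deriv ?_
    field_simp
    ring
  have hinj : InjOn (fun t : ℝ => t / (1 - t)) (Ioo 0 1) := by
    intro a ha b hb hab
    have h1a : 1 - a ≠ 0 := by linarith [ha.2]
    have h1b : 1 - b ≠ 0 := by linarith [hb.2]
    field_simp at hab
    linarith
  have himage : (fun t : ℝ => t / (1 - t)) '' Ioo 0 1 = Ioi 0 := by
    ext v
    constructor
    · rintro ⟨t, ht, rfl⟩
      exact div_pos ht.1 (by linarith [ht.2])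
    · intro (hv : 0 < v)
      refine ⟨v / (1 + v), ⟨by positivity, (div_lt_one (by positivity)).2 (by linarith)⟩, ?_⟩
      field_simp
      ring
  rw [← himage, integral_image_eq_integral_abs_deriv_smul measurableSet_Ioo hderiv hinj]
  refine setIntegral_congr_fun measurableSet_Ioo fun t _ => ?_
  rw [abs_of_nonneg (by positivity)]

theorem integral_Ioi_rpow_mul_one_add_rpow {a b : ℝ} (ha : 0 < a) (hb : 0 < b) :
    ∫ v in Ioi (0:ℝ), v ^ (a - 1) * (1 + v) ^ (-(a + b)) = Gamma a * Gamma b / Gamma (a + b) := by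
  rw [integral_Ioi_eq_integral_Ioo_div_one_sub, ← integral_rpow_mul_one_sub_rpow ha hb,
    intervalIntegral.integral_of_le zero_le_one, integral_Ioc_eq_integral_Ioo]
  refine setIntegral_congr_fun measurableSet_Ioo fun t ⟨ht0, ht1⟩ => ?_
  have hu : 0 < 1 - t := by linarith
  have hsum : 1 + t / (1 - t) = (1 - t)⁻¹ := by field_simp; ring
  have hsplit : (1 - t) ^ (a + b) = (1 - t) ^ (b - 1) * (1 - t) ^ (a - 1) * (1 - t) ^ (2:ℝ) := by
    rw [← rpow_add hu, ← rpow_add hu]; ring_nf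
  rw [smul_eq_mul, hsum, inv_rpow hu.le, rpow_neg hu.le, inv_inv, div_rpow ht0.le hu.le, hsplit,
    rpow_two]
  have hpos : 0 < (1 - t) ^ (a - 1) := rpow_pos_of_pos hu _
  field_simp

theorem integral_Ioi_rpow_div_one_add {δ : ℝ} (h0 : 0 < δ) (h1 : δ < 1) :
    ∫ v in Ioi (0:ℝ), v ^ (δ - 1) / (1 + v) = π / sin (π * δ) := by
  have h := integral_Ioi_rpow_mul_one_add_rpow h0 (sub_pos.2 h1)
  rw [add_sub_cancel, Gamma_one, div_one, Gamma_mul_Gamma_one_sub] at h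
  rw [← h]
  refine setIntegral_congr_fun measurableSet_Ioi fun v _ => ?_
  rw [rpow_neg_one, div_eq_mul_inv]

theorem integral_Ioi_rpow_mul_div_add {δ s : ℝ} (h0 : 0 < δ) (h1 : δ < 1) (hs : 0 < s) :
    ∫ u in Ioi (0:ℝ), u ^ (δ - 1) * (s / (u + s)) = s ^ δ * (π / sin (π * δ)) := by
  have h := integral_comp_mul_left_Ioi (fun u => u ^ (δ - 1) * (s / (u + s))) 0 hs
  rw [mul_zero, smul_eq_mul, eq_inv_mul_iff_mul_eq₀ hs.ne'] at h
  rw [← h, ← integral_Ioi_rpow_div_one_add h0 h1, ← integral_const_mul, ← integral_const_mul]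
  refine setIntegral_congr_fun measurableSet_Ioi fun x (hx : 0 < x) => ?_
  have hpow : s ^ δ = s * s ^ (δ - 1) := by
    rw [← rpow_one_add' hs.le (by linarith)]; ring_nf
  rw [mul_rpow hs.le hx.le, hpow]
  field_simp
  ring

theorem integral_Ioi_rpow_mul_div_rpow_add {α β s : ℝ} (hβ : 0 < β) (hβα : β < α) (hs : 0 < s) :
    ∫ y in Ioi (0:ℝ), y ^ (β - 1) * (s / (y ^ α + s)) =
      α⁻¹ * s ^ (β / α) * (π / sin (π * (β / α))) := by
  have hα : 0 < α := hβ.trans hβα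
  have hδ1 : β / α < 1 := (div_lt_one hα).2 hβα
  rw [mul_assoc, ← integral_Ioi_rpow_mul_div_add (div_pos hβ hα) hδ1 hs,
    ← integral_comp_rpow_Ioi_of_pos (g := fun u => u ^ (β / α - 1) * (s / (u + s))) hα,
    ← integral_const_mul]
  refine setIntegral_congr_fun measurableSet_Ioi fun y (hy : 0 < y) => ?_
  have hpow : y ^ (α - 1) * (y ^ α) ^ (β / α - 1) = y ^ (β - 1) := by
    rw [← rpow_mul hy.le, ← rpow_add hy]
    field_simp
    ring_nf
  rw [smul_eq_mul, ← hpow]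
  field_simp

theorem integral_div_norm_rpow_add {E : Type*} [NormedAddCommGroup E] [NormedSpace ℝ E]
    [Nontrivial E] [FiniteDimensional ℝ E] [MeasurableSpace E] [BorelSpace E]
    (μ : Measure E) [μ.IsAddHaarMeasure] {α s : ℝ} (hα : Module.finrank ℝ E < α) (hs : 0 < s) :
    ∫ x, s / (‖x‖ ^ α + s) ∂μ = Module.finrank ℝ E * μ.real (Metric.ball 0 1) *
      (α⁻¹ * s ^ (Module.finrank ℝ E / α) * (π / sin (π * (Module.finrank ℝ E / α)))) := by
  set n := Module.finrank ℝ E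
  have hn : 0 < n := Module.finrank_pos (R := ℝ) (M := E)
  rw [integral_fun_norm_addHaar μ (fun r => s / (r ^ α + s)), nsmul_eq_mul, smul_eq_mul,
    ← integral_Ioi_rpow_mul_div_rpow_add (by exact_mod_cast hn) hα hs, ← mul_assoc]
  congr 1
  refine setIntegral_congr_fun measurableSet_Ioi fun y _ => ?_
  rw [smul_eq_mul, ← rpow_natCast, Nat.cast_sub hn, Nat.cast_one]

/-- For `α > 2`, `s > 0`, `δ = 2/α`, the function `x ↦ s/(‖x‖^α + s)` is Lebesgue
integrable on `ℝ²` and `∫_{ℝ²} s/(‖x‖^α + s) dx = π·C(δ)·s^δ` with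
`C(δ) = πδ/sin(πδ)`. -/
theorem stmt_1 (α s : ℝ) (hα : 2 < α) (hs : 0 < s) :
    Integrable (fun x : EuclideanSpace ℝ (Fin 2) => s / (‖x‖ ^ α + s)) ∧
    ∫ x : EuclideanSpace ℝ (Fin 2), s / (‖x‖ ^ α + s) =
      π * (π * (2 / α) / Real.sin (π * (2 / α))) * s ^ (2 / α) := by
  have hα0 : 0 < α := by linarith
  have hsin : 0 < sin (π * (2 / α)) := by
    refine sin_pos_of_pos_of_lt_pi (by positivity) (mul_lt_of_lt_one_right pi_pos ?_)
    exact (div_lt_one hα0).2 hα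
  have hvalue : ∫ x : EuclideanSpace ℝ (Fin 2), s / (‖x‖ ^ α + s) =
      π * (π * (2 / α) / sin (π * (2 / α))) * s ^ (2 / α) := by
    rw [integral_div_norm_rpow_add volume (by simpa using hα) hs, finrank_euclideanSpace_fin,
      measureReal_def, EuclideanSpace.volume_ball_fin_two]
    simp only [Nat.cast_ofNat, ENNReal.ofReal_one, one_pow, one_mul,
      ENNReal.toReal_ofReal pi_nonneg]
    field_simp
  refine ⟨.of_integral_ne_zero ?_, hvalue⟩
  rw [hvalue]
  positivity
end

section
/- Let α > 2, s > 0, p ∈ (0,1), and set δ = 2/α. Then the function x ↦ 1/( p/(1 + s·‖x‖^(−α)) + (1−p) ) − 1 = p·s/(‖x‖^α + (1−p)·s) is Lebesgue integrable on ℝ² and ∫_{ℝ²} p·s/(‖x‖^α + (1−p)·s) dx = π·C(δ)·p·s^δ/(1−p)^(1−δ), where C(δ) = πδ/sin(πδ). -/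
/-!
In polar coordinates the integral is `2π p s ∫₀^∞ r / (r^α + (1 - p) s) dr`. The substitutions
`u = r^α` and `u = (1 - p) s t` reduce this to the Mellin integral `∫₀^∞ t^(δ-1) / (1 + t) dt`,
which `x = t / (1 + t)` turns into the Beta integral `B(δ, 1 - δ) = Γ(δ) Γ(1 - δ) = π / sin (π δ)`.
-/

open MeasureTheory Set Real

lemma ofReal_cpow_mul_one_sub_cpow {x : ℝ} (hx : x ∈ Icc (0 : ℝ) 1) (u v : ℝ) :
    (x : ℂ) ^ ((u : ℂ) - 1) * (1 - (x : ℂ)) ^ ((v : ℂ) - 1) =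
      ((x ^ (u - 1) * (1 - x) ^ (v - 1) : ℝ) : ℂ) := by
  rw [Complex.ofReal_mul, Complex.ofReal_cpow hx.1, Complex.ofReal_cpow (sub_nonneg.2 hx.2)]
  push_cast
  rfl

theorem integrableOn_rpow_mul_one_sub_rpow {u v : ℝ} (hu : 0 < u) (hv : 0 < v) :
    IntegrableOn (fun x : ℝ => x ^ (u - 1) * (1 - x) ^ (v - 1)) (Ioc 0 1) := by
  have hβ := Complex.betaIntegral_convergent (u := u) (v := v) (by simpa) (by simpa)
  rw [intervalIntegrable_iff_integrableOn_Ioc_of_le zero_le_one] at hβ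
  exact (hβ.congr_fun (fun x hx => ofReal_cpow_mul_one_sub_cpow (Ioc_subset_Icc_self hx) u v)
    measurableSet_Ioc).re

theorem integral_rpow_mul_one_sub_rpow_s2 {u v : ℝ} (hu : 0 < u) (hv : 0 < v) :
    ∫ x in Ioc 0 1, x ^ (u - 1) * (1 - x) ^ (v - 1) = Gamma u * Gamma v / Gamma (u + v) := by
  have hβ := Complex.betaIntegral_eq_Gamma_mul_div u v (by simpa) (by simpa)
  rw [Complex.betaIntegral, intervalIntegral.integral_of_le zero_le_one,
    setIntegral_congr_fun measurableSet_Ioc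
      (fun x hx => ofReal_cpow_mul_one_sub_cpow (Ioc_subset_Icc_self hx) u v),
    integral_complex_ofReal, ← Complex.ofReal_add, Complex.Gamma_ofReal, Complex.Gamma_ofReal,
    Complex.Gamma_ofReal] at hβ
  exact_mod_cast hβ

section DivOneAdd

lemma hasDerivAt_div_one_add {t : ℝ} (ht : 1 + t ≠ 0) :
    HasDerivAt (fun t : ℝ => t / (1 + t)) ((1 + t) ^ 2)⁻¹ t :=
  ((hasDerivAt_id' t).div ((hasDerivAt_id' t).const_add 1) ht).congr_deriv (by field_simp; ring)

lemma injOn_div_one_add : InjOn (fun t : ℝ => t / (1 + t)) (Ioi 0) := by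
  intro t₁ (ht₁ : 0 < t₁) t₂ (ht₂ : 0 < t₂) h
  field_simp at h
  linarith

lemma image_div_one_add_Ioi : (fun t : ℝ => t / (1 + t)) '' Ioi 0 = Ioo 0 1 := by
  ext x
  constructor
  · rintro ⟨t, ht : 0 < t, rfl⟩
    exact ⟨by positivity, (div_lt_one (by positivity)).2 (by linarith)⟩
  · rintro ⟨hx₀, hx₁⟩
    refine ⟨x / (1 - x), div_pos hx₀ (by linarith), ?_⟩
    field_simp
    ring

variable {E : Type*} [NormedAddCommGroup E] [NormedSpace ℝ E]

lemma abs_deriv_div_one_add_smul (g : ℝ → E) :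
    EqOn (fun t => |((1 + t) ^ 2)⁻¹| • g (t / (1 + t))) (fun t => ((1 + t) ^ 2)⁻¹ • g (t / (1 + t)))
      (Ioi 0) := fun t _ => by
  simp only [abs_of_nonneg (inv_nonneg.2 (sq_nonneg (1 + t)))]

theorem integrableOn_Ioi_comp_div_one_add_iff (g : ℝ → E) :
    IntegrableOn (fun t => ((1 + t) ^ 2)⁻¹ • g (t / (1 + t))) (Ioi 0) ↔
      IntegrableOn g (Ioo 0 1) := by
  rw [← image_div_one_add_Ioi, integrableOn_image_iff_integrableOn_abs_deriv_smul measurableSet_Ioi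
    (fun t (ht : 0 < t) => (hasDerivAt_div_one_add (by positivity)).hasDerivWithinAt)
    injOn_div_one_add, integrableOn_congr_fun (abs_deriv_div_one_add_smul g) measurableSet_Ioi]

theorem integral_comp_div_one_add_Ioi (g : ℝ → E) :
    ∫ t in Ioi 0, ((1 + t) ^ 2)⁻¹ • g (t / (1 + t)) = ∫ x in Ioo 0 1, g x := by
  rw [← image_div_one_add_Ioi, integral_image_eq_integral_abs_deriv_smul measurableSet_Ioi
    (fun t (ht : 0 < t) => (hasDerivAt_div_one_add (by positivity)).hasDerivWithinAt)
    injOn_div_one_add, setIntegral_congr_fun measurableSet_Ioi (abs_deriv_div_one_add_smul g)]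

end DivOneAdd

lemma smul_beta_integrand_comp_div_one_add {a t : ℝ} (ht : 0 < t) :
    ((1 + t) ^ 2)⁻¹ • ((t / (1 + t)) ^ (a - 1) * (1 - t / (1 + t)) ^ ((1 - a) - 1)) =
      t ^ (a - 1) / (1 + t) := by
  have h₁ : 0 < 1 + t := by positivity
  rw [smul_eq_mul, one_sub_div h₁.ne', add_sub_cancel_right, div_rpow ht.le h₁.le,
    div_rpow zero_le_one h₁.le, one_rpow, sub_sub_cancel_left, rpow_neg h₁.le,
    rpow_sub_one h₁.ne']
  field_simp

theorem integral_rpow_div_one_add_Ioi {a : ℝ} (h₀ : 0 < a) (h₁ : a < 1) :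
    IntegrableOn (fun t : ℝ => t ^ (a - 1) / (1 + t)) (Ioi 0) ∧
      ∫ t in Ioi 0, t ^ (a - 1) / (1 + t) = π / sin (π * a) := by
  set g : ℝ → ℝ := fun x => x ^ (a - 1) * (1 - x) ^ ((1 - a) - 1)
  have hsubst : EqOn (fun t => ((1 + t) ^ 2)⁻¹ • g (t / (1 + t))) (fun t => t ^ (a - 1) / (1 + t))
      (Ioi 0) := fun t ht => smul_beta_integrand_comp_div_one_add ht
  constructor
  · have hbeta :=
      (integrableOn_rpow_mul_one_sub_rpow h₀ (sub_pos.2 h₁)).mono_set Ioo_subset_Ioc_self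
    exact ((integrableOn_Ioi_comp_div_one_add_iff g).2 hbeta).congr_fun hsubst measurableSet_Ioi
  · rw [← setIntegral_congr_fun measurableSet_Ioi hsubst, integral_comp_div_one_add_Ioi,
      ← integral_Ioc_eq_integral_Ioo, integral_rpow_mul_one_sub_rpow_s2 h₀ (sub_pos.2 h₁),
      add_sub_cancel, Gamma_one, div_one, Gamma_mul_Gamma_one_sub]

lemma rpow_div_add_comp_mul_left {a c t : ℝ} (hc : 0 < c) (ht : 0 < t) :
    (c * t) ^ (a - 1) / (c * t + c) = c⁻¹ * c ^ (a - 1) * (t ^ (a - 1) / (1 + t)) := by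
  rw [mul_rpow hc.le ht.le]
  field_simp
  ring

theorem integral_rpow_div_add_Ioi {a c : ℝ} (h₀ : 0 < a) (h₁ : a < 1) (hc : 0 < c) :
    IntegrableOn (fun u : ℝ => u ^ (a - 1) / (u + c)) (Ioi 0) ∧
      ∫ u in Ioi 0, u ^ (a - 1) / (u + c) = c ^ (a - 1) * (π / sin (π * a)) := by
  obtain ⟨hint, hval⟩ := integral_rpow_div_one_add_Ioi h₀ h₁
  set g : ℝ → ℝ := fun u => u ^ (a - 1) / (u + c)
  have hscale : EqOn (fun t => g (c * t)) (fun t => c⁻¹ * c ^ (a - 1) * (t ^ (a - 1) / (1 + t)))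
      (Ioi 0) := fun t ht => rpow_div_add_comp_mul_left hc ht
  constructor
  · simpa only [mul_zero] using (integrableOn_Ioi_comp_mul_left_iff g 0 hc).1
      (IntegrableOn.congr_fun (hint.const_mul _) hscale.symm measurableSet_Ioi)
  · rw [← mul_zero c, ← integral_comp_mul_left_Ioi' g 0 hc,
      setIntegral_congr_fun measurableSet_Ioi hscale, integral_const_mul, hval, smul_eq_mul]
    field_simp

lemma rpow_sub_one_mul_rpow_rpow_div_sub_one {α β y : ℝ} (hα : α ≠ 0) (hy : 0 < y) :
    y ^ (α - 1) * (y ^ α) ^ (β / α - 1) = y ^ (β - 1) := by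
  rw [← rpow_mul hy.le, ← rpow_add hy]
  congr 1
  field_simp
  ring

theorem integral_rpow_div_rpow_add_Ioi {α β c : ℝ} (hβ : 0 < β) (hβα : β < α) (hc : 0 < c) :
    IntegrableOn (fun y : ℝ => y ^ (β - 1) / (y ^ α + c)) (Ioi 0) ∧
      ∫ y in Ioi 0, y ^ (β - 1) / (y ^ α + c) =
        α⁻¹ * c ^ (β / α - 1) * (π / sin (π * (β / α))) := by
  have hα : 0 < α := hβ.trans hβα
  obtain ⟨hint, hval⟩ := integral_rpow_div_add_Ioi (div_pos hβ hα) ((div_lt_one hα).2 hβα) hc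
  set g : ℝ → ℝ := fun u => u ^ (β / α - 1) / (u + c)
  have hsubst : EqOn (fun y => y ^ (α - 1) • g (y ^ α)) (fun y => y ^ (β - 1) / (y ^ α + c))
      (Ioi 0) := fun y hy => by
    simp only [g, smul_eq_mul]
    rw [mul_div_assoc', rpow_sub_one_mul_rpow_rpow_div_sub_one hα.ne' hy]
  constructor
  · exact ((integrableOn_Ioi_comp_rpow_iff' g hα.ne').2 hint).congr_fun hsubst measurableSet_Ioi
  · have hsub := integral_comp_rpow_Ioi_of_pos (g := g) hα
    simp only [smul_eq_mul, mul_assoc, integral_const_mul] at hsub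
    rw [← setIntegral_congr_fun measurableSet_Ioi hsubst, mul_assoc, ← hval, ← hsub]
    simp only [smul_eq_mul]
    field_simp

section Plane

variable {F : Type*} [NormedAddCommGroup F] [NormedSpace ℝ F]

theorem integrable_fun_norm_euclideanSpace_fin_two_iff {f : ℝ → F} :
    Integrable (fun x : EuclideanSpace ℝ (Fin 2) => f ‖x‖) ↔
      IntegrableOn (fun y : ℝ => y • f y) (Ioi 0) := by
  simpa using integrable_fun_norm_addHaar (volume : Measure (EuclideanSpace ℝ (Fin 2))) (f := f)

theorem integral_fun_norm_euclideanSpace_fin_two (f : ℝ → F) :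
    ∫ x : EuclideanSpace ℝ (Fin 2), f ‖x‖ = (2 * π) • ∫ y in Ioi 0, y • f y := by
  rw [integral_fun_norm_addHaar, measureReal_def, EuclideanSpace.volume_ball_fin_two]
  simp [mul_smul, ENNReal.toReal_ofReal pi_nonneg, ← Nat.cast_smul_eq_nsmul ℝ]

end Plane

/-- For `α > 2`, `s > 0`, `p ∈ (0,1)`, `δ = 2/α`, the function
`x ↦ p·s/(‖x‖^α + (1−p)·s)` is Lebesgue integrable on `ℝ²` and
`∫_{ℝ²} p·s/(‖x‖^α + (1−p)·s) dx = π·C(δ)·p·s^δ/(1−p)^(1−δ)` with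
`C(δ) = πδ/sin(πδ)`. -/
theorem stmt_2 (α s p : ℝ) (hα : 2 < α) (hs : 0 < s) (hp : p ∈ Set.Ioo (0 : ℝ) 1) :
    Integrable (fun x : EuclideanSpace ℝ (Fin 2) => p * s / (‖x‖ ^ α + (1 - p) * s)) ∧
    ∫ x : EuclideanSpace ℝ (Fin 2), p * s / (‖x‖ ^ α + (1 - p) * s) =
      π * (π * (2 / α) / Real.sin (π * (2 / α))) * p * s ^ (2 / α) /
        (1 - p) ^ (1 - 2 / α) := by
  have hq : 0 < 1 - p := sub_pos.2 hp.2
  obtain ⟨hint, hval⟩ := integral_rpow_div_rpow_add_Ioi two_pos hα (mul_pos hq hs)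
  have hradial : (fun y : ℝ => y • (p * s / (y ^ α + (1 - p) * s))) =
      fun y => p * s * (y ^ ((2 : ℝ) - 1) / (y ^ α + (1 - p) * s)) := by
    funext y
    rw [show (2 : ℝ) - 1 = 1 by norm_num, rpow_one, smul_eq_mul]
    ring
  refine ⟨integrable_fun_norm_euclideanSpace_fin_two_iff.2 (hradial ▸ hint.const_mul (p * s)), ?_⟩
  rw [integral_fun_norm_euclideanSpace_fin_two (fun t => p * s / (t ^ α + (1 - p) * s)), hradial,
    integral_const_mul, hval, smul_eq_mul, mul_rpow hq.le hs.le, rpow_sub_one hq.ne',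
    rpow_sub_one hs.ne', rpow_sub hq, rpow_one]
  field_simp
end

section
/- Let I be a finite index set and let h, (h_i)_{i∈I}, (B_i)_{i∈I} be mutually independent real random variables on a probability space, where h and each h_i are exponentially distributed with rate 1 and each B_i is Bernoulli with parameter p ∈ [0,1]. Then for any constants c ≥ 0 and a_i ≥ 0 (i ∈ I), P( h > c·∑_{i∈I} B_i·h_i·a_i ) = ∏_{i∈I} ( p/(1 + c·a_i) + (1−p) ). -/
/-!
Since the interference `T = c ∑ Bᵢ hᵢ aᵢ` is nonnegative and independent of `h`, conditioning on
it turns the exponential tail of `h` into `P(h > T) = E[e^{-T}]`, the Laplace transform of `T`.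
The pairs `(Bᵢ, hᵢ)` are independent, so `E[e^{-T}] = ∏ E[e^{-c aᵢ Bᵢ hᵢ}]`, and conditioning on
`Bᵢ ∈ {0, 1}` gives `E[e^{-c aᵢ Bᵢ hᵢ}] = (1 - p) + p E[e^{-c aᵢ hᵢ}] = (1 - p) + p / (1 + c aᵢ)`.
-/

open MeasureTheory ProbabilityTheory Set Real

open scoped ENNReal

section Exponential

lemma lintegral_exp_neg_mul_expMeasure {r l : ℝ} (hr : 0 < r) (hrl : 0 < r + l) :
    ∫⁻ x, ENNReal.ofReal (exp (-(l * x))) ∂expMeasure r = ENNReal.ofReal (r / (r + l)) := by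
  have hint : IntegrableOn (fun x => r * exp (-(r + l) * x)) (Ioi 0) :=
    (integrableOn_exp_mul_Ioi (by linarith) 0).const_mul r
  have hpdf : Measurable (exponentialPDF r) := (measurable_exponentialPDFReal r).ennreal_ofReal
  calc ∫⁻ x, ENNReal.ofReal (exp (-(l * x))) ∂expMeasure r
      = ∫⁻ x in Ici 0, ENNReal.ofReal (r * exp (-(r + l) * x)) := by
        rw [show expMeasure r = volume.withDensity (exponentialPDF r) from rfl,
          lintegral_withDensity_eq_lintegral_mul _ hpdf (by fun_prop),
          ← lintegral_indicator measurableSet_Ici]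
        refine lintegral_congr fun x => ?_
        rw [Pi.mul_apply, exponentialPDF_eq]
        split_ifs with hx
        · rw [indicator_of_mem (mem_Ici.2 hx), ← ENNReal.ofReal_mul (by positivity), mul_assoc,
            ← exp_add]
          ring_nf
        · simp [hx]
    _ = ENNReal.ofReal (r / (r + l)) := by
        rw [setLIntegral_congr Ioi_ae_eq_Ici.symm, ← ofReal_integral_eq_lintegral_ofReal hint
          (ae_of_all _ fun x => by positivity), integral_const_mul,
          integral_exp_mul_Ioi (by linarith)]
        congr 1
        field_simp
        simp

variable {Ω : Type*} [MeasurableSpace Ω] {μ : Measure Ω} [IsProbabilityMeasure μ]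

lemma map_eq_expMeasure {r : ℝ} (hr : 0 < r) {X : Ω → ℝ} (hX : Measurable X)
    (htail : ∀ x, 0 ≤ x → μ {ω | x < X ω} = ENNReal.ofReal (exp (-(r * x)))) :
    μ.map X = expMeasure r := by
  have := isProbabilityMeasure_expMeasure hr
  have := Measure.isProbabilityMeasure_map (μ := μ) hX.aemeasurable
  have hcdf : ∀ x, 0 ≤ x → μ (X ⁻¹' Iic x) = ENNReal.ofReal (1 - exp (-(r * x))) := by
    intro x hx
    have hset : X ⁻¹' Iic x = {ω | x < X ω}ᶜ := by ext; simp
    rw [hset, prob_compl_eq_one_sub (measurableSet_lt measurable_const hX), htail x hx,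
      ENNReal.ofReal_sub _ (exp_pos _).le, ENNReal.ofReal_one]
  refine Measure.eq_of_cdf _ _ (StieltjesFunction.ext fun x => ?_)
  rw [cdf_expMeasure_eq hr, cdf_eq_real, measureReal_def, Measure.map_apply hX measurableSet_Iic]
  split_ifs with hx
  · rw [hcdf x hx, ENNReal.toReal_ofReal]
    simp only [sub_nonneg, exp_le_one_iff, neg_nonpos]
    positivity
  · have : μ (X ⁻¹' Iic x) = 0 :=
      measure_mono_null (preimage_mono (Iic_subset_Iic.2 (le_of_not_ge hx)))
        (by simpa using hcdf 0 le_rfl)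
    simp [this]

end Exponential

namespace ProbabilityTheory

variable {Ω : Type*} [MeasurableSpace Ω] {μ : Measure Ω}

lemma iIndepFun.prodMk_of_sumElim {ι β : Type*} [MeasurableSpace β]
    {X Y : ι → Ω → β} (hXY : iIndepFun (Sum.elim X Y) μ)
    (hX : ∀ i, Measurable (X i)) (hY : ∀ i, Measurable (Y i)) :
    iIndepFun (fun i ω => (X i ω, Y i ω)) μ := by
  classical
  have hinter : ∀ (S : Finset ι) (A B : ι → Set β), (∀ i ∈ S, MeasurableSet (A i)) →
      (∀ i ∈ S, MeasurableSet (B i)) →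
      μ (⋂ i ∈ S, (X i ⁻¹' A i ∩ Y i ⁻¹' B i)) = ∏ i ∈ S, μ (X i ⁻¹' A i) * μ (Y i ⁻¹' B i) := by
    intro S A B hA hB
    have := hXY.measure_inter_preimage_eq_mul (S.disjSum S) (sets := Sum.elim A B)
      (by simpa [Sum.forall] using ⟨hA, hB⟩)
    simp only [Finset.prod_disjSum, Sum.elim_inl, Sum.elim_inr] at this
    rw [Finset.prod_mul_distrib, ← this]
    congr 1
    ext ω
    simp [Sum.forall, forall_and]
  -- It suffices to test independence on the π-system of preimages of rectangles.
  rw [iIndepFun_iff_iIndep]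
  refine iIndepSets.iIndep (fun i => ((hX i).prodMk (hY i)).comap_le)
    (fun i => (fun s => (fun ω => (X i ω, Y i ω)) ⁻¹' s) ''
      image2 (· ×ˢ ·) {A : Set β | MeasurableSet A} {B : Set β | MeasurableSet B})
    (fun i => isPiSystem_prod.comap _)
    (fun i => by rw [← generateFrom_prod, MeasurableSpace.comap_generateFrom]) ?_
  rw [iIndepSets_iff]
  intro S f hf
  have hrect : ∀ i ∈ S, ∃ A B : Set β, MeasurableSet A ∧ MeasurableSet B ∧
      f i = X i ⁻¹' A ∩ Y i ⁻¹' B := by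
    intro i hi
    obtain ⟨_, ⟨A, hA, B, hB, rfl⟩, hfi⟩ := hf i hi
    exact ⟨A, B, hA, hB, hfi.symm⟩
  choose! A B hA hB hfAB using hrect
  rw [Finset.prod_congr rfl fun i hi => by rw [hfAB i hi], iInter₂_congr fun i hi => hfAB i hi,
    hinter S A B hA hB]
  refine Finset.prod_congr rfl fun i hi => ?_
  simpa using (hinter {i} A B (by simpa using hA i hi) (by simpa using hB i hi)).symm

lemma iIndepFun.indepFun_of_sumElim {ι κ β : Type*} [Fintype ι] [Fintype κ] [MeasurableSpace β]
    {X : ι → Ω → β} {Y : κ → Ω → β} (hXY : iIndepFun (Sum.elim X Y) μ)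
    (hX : ∀ i, Measurable (X i)) (hY : ∀ j, Measurable (Y j)) :
    IndepFun (fun ω i => X i ω) (fun ω j => Y j ω) μ := by
  classical
  have := hXY.indepFun_finset (Finset.univ.map .inl) (Finset.univ.map .inr)
    (by simp [Finset.disjoint_left]) (by simpa [Sum.forall] using ⟨hX, hY⟩)
  exact this.comp (measurable_pi_lambda (fun v i => v ⟨.inl i, by simp⟩)
    fun i => measurable_pi_apply _) (measurable_pi_lambda (fun v j => v ⟨.inr j, by simp⟩)
    fun j => measurable_pi_apply _)

variable [IsFiniteMeasure μ]

lemma IndepFun.lintegral_comp_eq_lintegral_lintegral {α β : Type*} [MeasurableSpace α]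
    [MeasurableSpace β] {f : Ω → α} {g : Ω → β} (hfg : IndepFun f g μ) (hf : Measurable f)
    (hg : Measurable g) {F : α → β → ℝ≥0∞} (hF : Measurable (Function.uncurry F)) :
    ∫⁻ ω, F (f ω) (g ω) ∂μ = ∫⁻ ω, ∫⁻ ω', F (f ω) (g ω') ∂μ ∂μ := by
  have hmap := (indepFun_iff_map_prod_eq_prod_map_map hf.aemeasurable hg.aemeasurable).1 hfg
  calc ∫⁻ ω, F (f ω) (g ω) ∂μ = ∫⁻ p, Function.uncurry F p ∂(μ.map fun ω => (f ω, g ω)) :=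
        (lintegral_map hF (hf.prodMk hg)).symm
    _ = ∫⁻ ω, ∫⁻ ω', F (f ω) (g ω') ∂μ ∂μ := by
        rw [hmap, lintegral_prod _ hF.aemeasurable, lintegral_map _ hf]
        · refine lintegral_congr fun ω => ?_
          exact lintegral_map (hF.comp measurable_prodMk_left) hg
        · exact hF.lintegral_prod_right'

end ProbabilityTheory

section TwoPoint

variable {Ω β : Type*} [MeasurableSpace Ω] {μ : Measure Ω} [MeasurableSpace β]
  [MeasurableSingletonClass β] {B : Ω → β} {a b : β}

lemma ae_eq_or_eq_of_measure_add_eq_one [IsProbabilityMeasure μ] (hB : Measurable B)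
    (hab : a ≠ b) (h : μ {ω | B ω = a} + μ {ω | B ω = b} = 1) :
    ∀ᵐ ω ∂μ, B ω = a ∨ B ω = b := by
  have hBb : MeasurableSet {ω | B ω = b} := hB (measurableSet_singleton b)
  refine (mem_ae_iff_prob_eq_one ((hB (measurableSet_singleton a)).union hBb)).2 ?_
  rwa [measure_union (disjoint_left.2 fun ω ha hb => hab (ha.symm.trans hb)) hBb]

lemma lintegral_comp_of_ae_eq_or_eq (hB : Measurable B) (hab : a ≠ b)
    (h : ∀ᵐ ω ∂μ, B ω = a ∨ B ω = b) (g : β → ℝ≥0∞) :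
    ∫⁻ ω, g (B ω) ∂μ = μ {ω | B ω = a} * g a + μ {ω | B ω = b} * g b := by
  have hBa : MeasurableSet {ω | B ω = a} := hB (measurableSet_singleton a)
  have hBb : MeasurableSet {ω | B ω = b} := hB (measurableSet_singleton b)
  calc ∫⁻ ω, g (B ω) ∂μ
      = ∫⁻ ω, ({ω | B ω = a}.indicator (fun _ => g a) ω +
          {ω | B ω = b}.indicator (fun _ => g b) ω) ∂μ := by
        refine lintegral_congr_ae (h.mono fun ω hω => ?_)
        rcases hω with hω | hω <;> simp [indicator, hω, hab, hab.symm]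
    _ = μ {ω | B ω = a} * g a + μ {ω | B ω = b} * g b := by
        rw [lintegral_add_left (measurable_const.indicator hBa), lintegral_indicator_const hBa,
          lintegral_indicator_const hBb, mul_comm, mul_comm (g b)]

end TwoPoint

section Laplace

variable {Ω : Type*} [MeasurableSpace Ω] {μ : Measure Ω} [IsProbabilityMeasure μ]

lemma measure_lt_eq_lintegral_exp_neg {T X : Ω → ℝ} (hTX : IndepFun T X μ) (hT : Measurable T)
    (hX : Measurable X) (hT0 : 0 ≤ᵐ[μ] T)
    (htail : ∀ x, 0 ≤ x → μ {ω | x < X ω} = ENNReal.ofReal (exp (-x))) :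
    μ {ω | T ω < X ω} = ∫⁻ ω, ENNReal.ofReal (exp (-T ω)) ∂μ := by
  have hs : MeasurableSet {p : ℝ × ℝ | p.1 < p.2} := measurableSet_lt measurable_fst measurable_snd
  calc μ {ω | T ω < X ω} = ∫⁻ ω, {p : ℝ × ℝ | p.1 < p.2}.indicator 1 (T ω, X ω) ∂μ := by
        exact (lintegral_indicator_one (hT.prodMk hX hs)).symm
    _ = ∫⁻ ω, μ {ω' | T ω < X ω'} ∂μ := by
        rw [hTX.lintegral_comp_eq_lintegral_lintegral hT hX
          (F := fun t x => {p : ℝ × ℝ | p.1 < p.2}.indicator 1 (t, x))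
          (measurable_one.indicator hs)]
        refine lintegral_congr fun ω => ?_
        exact lintegral_indicator_one (measurableSet_lt measurable_const hX)
    _ = ∫⁻ ω, ENNReal.ofReal (exp (-T ω)) ∂μ := lintegral_congr_ae (hT0.mono fun ω h => htail _ h)

lemma lintegral_exp_neg_bernoulli_mul_exponential {B X : Ω → ℝ} (hBX : IndepFun B X μ)
    (hB : Measurable B) (hX : Measurable X) (hB01 : ∀ᵐ ω ∂μ, B ω = 0 ∨ B ω = 1)
    (hXlaw : μ.map X = expMeasure 1) {l : ℝ} (hl : 0 ≤ l) :
    ∫⁻ ω, ENNReal.ofReal (exp (-(l * (B ω * X ω)))) ∂μ =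
      μ {ω | B ω = 0} + μ {ω | B ω = 1} * ENNReal.ofReal (1 / (1 + l)) := by
  calc ∫⁻ ω, ENNReal.ofReal (exp (-(l * (B ω * X ω)))) ∂μ
      = ∫⁻ ω, ∫⁻ x, ENNReal.ofReal (exp (-(l * B ω * x))) ∂μ.map X ∂μ := by
        rw [hBX.lintegral_comp_eq_lintegral_lintegral hB hX
          (F := fun b x => ENNReal.ofReal (exp (-(l * (b * x))))) (by fun_prop)]
        refine lintegral_congr fun ω => ?_
        rw [lintegral_map (by fun_prop) hX]
        simp only [mul_assoc]
    _ = ∫⁻ ω, ENNReal.ofReal (1 / (1 + l * B ω)) ∂μ := by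
        refine lintegral_congr_ae (hB01.mono fun ω hω => ?_)
        have hlB : 0 ≤ l * B ω := mul_nonneg hl (by rcases hω with hω | hω <;> simp [hω])
        dsimp only
        rw [hXlaw, lintegral_exp_neg_mul_expMeasure one_pos (by linarith)]
    _ = μ {ω | B ω = 0} + μ {ω | B ω = 1} * ENNReal.ofReal (1 / (1 + l)) := by
        rw [lintegral_comp_of_ae_eq_or_eq hB zero_ne_one hB01
          (fun b => ENNReal.ofReal (1 / (1 + l * b)))]
        simp

lemma lintegral_exp_neg_sum_bernoulli_mul_exponential {ι : Type*} [Fintype ι]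
    {X B : ι → Ω → ℝ} (hXB : iIndepFun (Sum.elim X B) μ) (hX : ∀ i, Measurable (X i))
    (hB : ∀ i, Measurable (B i)) (hXlaw : ∀ i, μ.map (X i) = expMeasure 1)
    (hB01 : ∀ i, ∀ᵐ ω ∂μ, B i ω = 0 ∨ B i ω = 1) {l : ι → ℝ} (hl : ∀ i, 0 ≤ l i) :
    ∫⁻ ω, ENNReal.ofReal (exp (-∑ i, l i * (B i ω * X i ω))) ∂μ =
      ∏ i, (μ {ω | B i ω = 0} + μ {ω | B i ω = 1} * ENNReal.ofReal (1 / (1 + l i))) := by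
  calc ∫⁻ ω, ENNReal.ofReal (exp (-∑ i, l i * (B i ω * X i ω))) ∂μ
      = ∫⁻ ω, ∏ i, ENNReal.ofReal (exp (-(l i * (B i ω * X i ω)))) ∂μ := by
        simp_rw [← Finset.sum_neg_distrib, exp_sum,
          ENNReal.ofReal_prod_of_nonneg fun i _ => (exp_pos _).le]
    _ = ∏ i, ∫⁻ ω, ENNReal.ofReal (exp (-(l i * (B i ω * X i ω)))) ∂μ :=
        lintegral_prod_eq_prod_lintegral_of_indepFun _ _
          ((hXB.prodMk_of_sumElim hX hB).comp
            (fun i q => ENNReal.ofReal (exp (-(l i * (q.2 * q.1))))) (by fun_prop))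
          (fun i => by fun_prop)
    _ = _ := Finset.prod_congr rfl fun i _ =>
        lintegral_exp_neg_bernoulli_mul_exponential
          (hXB.indepFun (by simp : (.inr i : ι ⊕ ι) ≠ .inl i)) (hB i) (hX i) (hB01 i) (hXlaw i)
          (hl i)

lemma measure_sum_bernoulli_mul_exponential_lt {ι : Type*} [Fintype ι] {Y : Ω → ℝ}
    {X B : ι → Ω → ℝ} (hind : iIndepFun (Sum.elim (fun _ : Unit => Y) (Sum.elim X B)) μ)
    (hY : Measurable Y) (hX : ∀ i, Measurable (X i)) (hB : ∀ i, Measurable (B i))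
    (hYtail : ∀ x, 0 ≤ x → μ {ω | x < Y ω} = ENNReal.ofReal (exp (-x)))
    (hXtail : ∀ i, ∀ x, 0 ≤ x → μ {ω | x < X i ω} = ENNReal.ofReal (exp (-x)))
    (hB01 : ∀ i, ∀ᵐ ω ∂μ, B i ω = 0 ∨ B i ω = 1) {l : ι → ℝ} (hl : ∀ i, 0 ≤ l i) :
    μ {ω | ∑ i, l i * (B i ω * X i ω) < Y ω} =
      ∏ i, (μ {ω | B i ω = 0} + μ {ω | B i ω = 1} * ENNReal.ofReal (1 / (1 + l i))) := by
  have hX0 : ∀ i, ∀ᵐ ω ∂μ, 0 < X i ω := fun i =>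
    (mem_ae_iff_prob_eq_one (measurableSet_lt measurable_const (hX i))).2
      (by simpa using hXtail i 0 le_rfl)
  have hT0 : 0 ≤ᵐ[μ] fun ω => ∑ i, l i * (B i ω * X i ω) := by
    filter_upwards [ae_all_iff.2 hB01, ae_all_iff.2 hX0] with ω hB01 hX0
    refine Finset.sum_nonneg fun i _ => mul_nonneg (hl i) (mul_nonneg ?_ (hX0 i).le)
    rcases hB01 i with hBi | hBi <;> simp [hBi]
  have hTY : IndepFun (fun ω => ∑ i, l i * (B i ω * X i ω)) Y μ := by
    have hsplit : IndepFun (fun ω (_ : Unit) => Y ω) (fun ω k => Sum.elim X B k ω) μ :=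
      hind.indepFun_of_sumElim (fun _ => hY) (Sum.forall.2 ⟨hX, hB⟩)
    have hφ : Measurable fun v : ι ⊕ ι → ℝ => ∑ i, l i * (v (.inr i) * v (.inl i)) := by
      fun_prop
    exact hsplit.symm.comp hφ (measurable_pi_apply ())
  rw [measure_lt_eq_lintegral_exp_neg hTY (by fun_prop) hY hT0 hYtail]
  exact lintegral_exp_neg_sum_bernoulli_mul_exponential
    (hind.precomp (g := Sum.inr) Sum.inr_injective) hX hB
    (fun i => map_eq_expMeasure one_pos (hX i) (by simpa using hXtail i)) hB01 hl

end Laplace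

/-- Let `h`, `(hs i)`, `(Bs i)` (`i` in a finite index set) be mutually independent,
with `h` and each `hs i` exponential of rate 1 and each `Bs i` Bernoulli(p) (valued
in {0,1}). Then for constants `c ≥ 0`, `a i ≥ 0`,
`P(h > c·∑ i, Bs i · hs i · a i) = ∏ i, (p/(1 + c·a i) + (1−p))`. -/
theorem stmt_4 {Ω : Type*} [MeasurableSpace Ω] (μ : Measure Ω) [IsProbabilityMeasure μ]
    {ι : Type*} [Fintype ι]
    (h : Ω → ℝ) (hs Bs : ι → Ω → ℝ)
    (hhmeas : Measurable h) (hhsmeas : ∀ i, Measurable (hs i))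
    (hBsmeas : ∀ i, Measurable (Bs i))
    (p : ℝ) (hp : p ∈ Set.Icc (0 : ℝ) 1)
    (hindep : iIndepFun
      (Sum.elim (fun _ : Unit => h) (Sum.elim hs Bs)) μ)
    (hhtail : ∀ x : ℝ, 0 ≤ x → μ {ω | h ω > x} = ENNReal.ofReal (Real.exp (-x)))
    (hhstail : ∀ i, ∀ x : ℝ, 0 ≤ x → μ {ω | hs i ω > x} = ENNReal.ofReal (Real.exp (-x)))
    (hB1 : ∀ i, μ {ω | Bs i ω = 1} = ENNReal.ofReal p)
    (hB0 : ∀ i, μ {ω | Bs i ω = 0} = ENNReal.ofReal (1 - p))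
    (c : ℝ) (hc : 0 ≤ c) (a : ι → ℝ) (ha : ∀ i, 0 ≤ a i) :
    μ {ω | h ω > c * ∑ i, Bs i ω * hs i ω * a i} =
      ENNReal.ofReal (∏ i, (p / (1 + c * a i) + (1 - p))) := by
  obtain ⟨hp0, hp1⟩ := hp
  have hB01 : ∀ i, ∀ᵐ ω ∂μ, Bs i ω = 0 ∨ Bs i ω = 1 := fun i =>
    ae_eq_or_eq_of_measure_add_eq_one (hBsmeas i) zero_ne_one (by
      rw [hB0, hB1, ← ENNReal.ofReal_add (by linarith) hp0]
      simp)
  have h1ca : ∀ i, 0 ≤ 1 + c * a i := fun i => by nlinarith [ha i]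
  have hsum : ∀ ω, c * ∑ i, Bs i ω * hs i ω * a i = ∑ i, c * a i * (Bs i ω * hs i ω) := fun ω => by
    rw [Finset.mul_sum]
    exact Finset.sum_congr rfl fun i _ => by ring
  simp_rw [gt_iff_lt, hsum]
  rw [measure_sum_bernoulli_mul_exponential_lt hindep hhmeas hhsmeas hBsmeas hhtail hhstail hB01
      fun i => mul_nonneg hc (ha i),
    ENNReal.ofReal_prod_of_nonneg fun i _ => add_nonneg (div_nonneg hp0 (h1ca i)) (by linarith)]
  refine Finset.prod_congr rfl fun i _ => ?_
  rw [hB0, hB1, ← ENNReal.ofReal_mul hp0,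
    ← ENNReal.ofReal_add (by linarith) (mul_nonneg hp0 (one_div_nonneg.2 (h1ca i)))]
  congr 1
  ring
end

section
/- Let K > 0, c > 0, and δ ∈ (0,1], and define U(τ) = K·τ^δ·exp(−c·τ^δ) for τ > 0. Then U attains its strict global maximum on (0,∞) at the unique point τ* = c^(−1/δ): for all τ > 0 with τ ≠ τ*, U(τ) < U(τ*), and U(τ*) = K/(c·e). In particular, with c = A'·p/(1−p)^(1−δ) and q = (A'·p)^(−1/δ), the maximizer is τ* = q·(1−p)^((1−δ)/δ). -/
open Real

lemma aux_peak (c x : ℝ) (hc : 0 < c) (hx : 0 < x) (hne : c * x ≠ 1) :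
    x * Real.exp (-(c * x)) < (1 / c) * Real.exp (-1) := by
  have h1 : c * x < Real.exp (c * x - 1) := by
    have := Real.add_one_lt_exp (x := c * x - 1) (by intro h; apply hne; linarith)
    linarith
  have h2 : c * x * Real.exp (-(c * x)) < Real.exp (-1) := by
    have hpos : 0 < Real.exp (-(c * x)) := Real.exp_pos _
    calc c * x * Real.exp (-(c * x)) < Real.exp (c * x - 1) * Real.exp (-(c * x)) := by
          exact mul_lt_mul_of_pos_right h1 hpos
      _ = Real.exp (-1) := by rw [← Real.exp_add]; ring_nf
  calc x * Real.exp (-(c * x)) = (1 / c) * (c * x * Real.exp (-(c * x))) := by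
        field_simp
    _ < (1 / c) * Real.exp (-1) := by
        exact mul_lt_mul_of_pos_left h2 (by positivity)

/-- For `K > 0`, `c > 0`, `δ ∈ (0,1]`, `U(τ) = K·τ^δ·exp(−c·τ^δ)` attains its strict
global maximum on `(0,∞)` at the unique point `τ* = c^(−1/δ)`, with
`U(τ*) = K/(c·e)`; in particular, with `c = A'·p/(1−p)^(1−δ)` and
`q = (A'·p)^(−1/δ)`, the maximizer is `τ* = q·(1−p)^((1−δ)/δ)`. -/
theorem stmt_9 (K c δ : ℝ) (hK : 0 < K) (hc : 0 < c) (hδ : δ ∈ Set.Ioc (0 : ℝ) 1) :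
    (∀ τ : ℝ, 0 < τ → τ ≠ c ^ (-1 / δ) →
      K * τ ^ δ * Real.exp (-c * τ ^ δ) <
        K * (c ^ (-1 / δ)) ^ δ * Real.exp (-c * (c ^ (-1 / δ)) ^ δ)) ∧
    K * (c ^ (-1 / δ)) ^ δ * Real.exp (-c * (c ^ (-1 / δ)) ^ δ) = K / (c * Real.exp 1) ∧
    (∀ A' p : ℝ, 0 < A' → p ∈ Set.Ioo (0 : ℝ) 1 → c = A' * p / (1 - p) ^ (1 - δ) →
      c ^ (-1 / δ) = (A' * p) ^ (-1 / δ) * (1 - p) ^ ((1 - δ) / δ)) := by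
  obtain ⟨hδ0, hδ1⟩ := hδ
  have hδne : δ ≠ 0 := ne_of_gt hδ0
  have hstar : (c ^ (-1 / δ)) ^ δ = 1 / c := by
    rw [← Real.rpow_mul hc.le, div_mul_cancel₀ _ hδne, Real.rpow_neg_one, one_div]
  have hstar' : ((c : ℝ) ^ (-1 / δ) : ℝ) ^ δ = 1 / c := hstar
  refine ⟨?_, ?_, ?_⟩
  · intro τ hτ hne
    have hx : 0 < τ ^ δ := Real.rpow_pos_of_pos hτ δ
    have hcx : c * τ ^ δ ≠ 1 := by
      intro h
      apply hne
      have : τ ^ δ = 1 / c := by field_simp at h ⊢; linarith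
      have := congrArg (fun y : ℝ => y ^ (1 / δ)) this
      rw [← Real.rpow_mul hτ.le] at this
      rw [mul_one_div, div_self hδne, Real.rpow_one] at this
      rw [this]
      rw [one_div, ← Real.rpow_neg_one, ← Real.rpow_mul hc.le]
      congr 1
      field_simp
    have key := aux_peak c (τ ^ δ) hc hx hcx
    rw [hstar']
    have e1 : -c * τ ^ δ = -(c * τ ^ δ) := by ring
    have e2 : -c * (1 / c) = -1 := by field_simp
    rw [e1, e2]
    calc K * τ ^ δ * Real.exp (-(c * τ ^ δ))
        = K * (τ ^ δ * Real.exp (-(c * τ ^ δ))) := by ring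
      _ < K * ((1 / c) * Real.exp (-1)) := by exact mul_lt_mul_of_pos_left key hK
      _ = K * (1 / c) * Real.exp (-1) := by ring
  · rw [hstar']
    have e2 : -c * (1 / c) = -1 := by field_simp
    rw [e2, Real.exp_neg]
    field_simp
  · intro A' p hA' hp hcdef
    obtain ⟨hp0, hp1⟩ := hp
    have h1p : (0 : ℝ) < 1 - p := by linarith
    have hAp : 0 < A' * p := by positivity
    have hb : (0 : ℝ) < (1 - p) ^ (1 - δ) := Real.rpow_pos_of_pos h1p _
    rw [hcdef, Real.div_rpow hAp.le hb.le, ← Real.rpow_mul h1p.le]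
    rw [div_eq_mul_inv, ← Real.rpow_neg h1p.le]
    congr 1
    field_simp
end

section
/- Let A' > 0, δ ∈ (0,1), τ > 0, K₀ > 0, and define ψ_n(p) := ∫₀^∞ (e^t − 1)^(nδ) · exp( −A'·p·(e^t − 1)^δ ) dt and U(p) := K₀·p³·τ^δ·exp( −A'·p·τ^δ/(1−p)^(1−δ) )·ψ₀(p) for p ∈ (0,1). If p* ∈ (0,1) is a local maximum of U on (0,1), then p* satisfies 3/(A'·p*) − τ^δ·(1 − p*·δ)/(1−p*)^(2−δ) = ψ₁(p*)/ψ₀(p*). -/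
open MeasureTheory Set Real

/-- `ψ_n(p) := ∫₀^∞ (e^t − 1)^(nδ)·exp(−A'·p·(e^t − 1)^δ) dt`. -/
noncomputable def psi (A' δ : ℝ) (n : ℕ) (p : ℝ) : ℝ :=
  ∫ t in Set.Ioi (0 : ℝ),
    (Real.exp t - 1) ^ ((n : ℝ) * δ) * Real.exp (-A' * p * (Real.exp t - 1) ^ δ)

/-!
At an interior maximum the derivative of `U(p) = K₀ τ^δ · p³ · exp(g(p)) · ψ₀(p)`, where
`g(p) = -A' p τ^δ / (1 - p)^(1-δ)`, vanishes. Differentiating under the integral sign gives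
`ψ₀' = -A' ψ₁`; this is legitimate because for `p > p*/2` the differentiated integrand is
dominated by its value at `p*/2`, and all these integrands decay faster than `e^{-t}`.
With `g'(p) = -A' τ^δ (1 - pδ) / (1 - p)^(2-δ)`, the equation `U'(p*) = 0` divided by
`A' U(p*)` is the claimed identity.
-/

open Filter Topology Asymptotics

theorem tendsto_rpow_mul_exp_mul_rpow_atTop_nhds_zero (s : ℝ) {b δ : ℝ} (hb : b < 0)
    (hδ : 0 < δ) : Tendsto (fun u : ℝ => u ^ s * exp (b * u ^ δ)) atTop (𝓝 0) := by
  have h := (tendsto_rpow_mul_exp_neg_mul_atTop_nhds_zero (s / δ) (-b) (neg_pos.2 hb)).comp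
    (tendsto_rpow_atTop hδ)
  refine h.congr' ?_
  filter_upwards [eventually_gt_atTop 0] with u hu
  simp only [Function.comp_apply, neg_neg, ← rpow_mul hu.le, mul_div_cancel₀ s hδ.ne']

theorem continuous_rpow_exp_sub_one_mul_exp {b c δ : ℝ} (hc : 0 ≤ c) (hδ : 0 ≤ δ) :
    Continuous fun t : ℝ => (exp t - 1) ^ c * exp (b * (exp t - 1) ^ δ) := by
  fun_prop (disch := assumption)

theorem integrableOn_rpow_exp_sub_one_mul_exp {b c δ : ℝ} (hb : b < 0) (hc : 0 ≤ c)
    (hδ : 0 < δ) :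
    IntegrableOn (fun t : ℝ => (exp t - 1) ^ c * exp (b * (exp t - 1) ^ δ)) (Ioi 0) := by
  refine integrable_of_isBigO_exp_neg one_pos
    (continuous_rpow_exp_sub_one_mul_exp hc hδ.le).continuousOn ?_
  refine isBigO_of_div_tendsto_nhds (.of_forall fun t h => absurd h (exp_pos _).ne') 0 ?_
  have hu : Tendsto (fun t : ℝ => exp t - 1) atTop atTop :=
    tendsto_atTop_add_const_right _ _ tendsto_exp_atTop
  -- with `u = e^t - 1`, the integrand times `e^t` is `(u^c + u^(c+1)) · exp (b u^δ)`
  have h := ((tendsto_rpow_mul_exp_mul_rpow_atTop_nhds_zero c hb hδ).add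
    (tendsto_rpow_mul_exp_mul_rpow_atTop_nhds_zero (c + 1) hb hδ)).comp hu
  rw [add_zero] at h
  refine h.congr' ?_
  filter_upwards [eventually_gt_atTop 0] with t ht
  simp only [Function.comp_apply, Pi.div_apply, neg_mul, one_mul, exp_neg, div_inv_eq_mul,
    rpow_add (sub_pos.2 (one_lt_exp_iff.2 ht)), rpow_one]
  ring

theorem psi_pos {A' δ p : ℝ} (n : ℕ) (hA : 0 < A') (hδ : 0 < δ) (hp : 0 < p) :
    0 < psi A' δ n p := by
  have hpos : ∀ t ∈ Ioi (0 : ℝ),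
      0 < (exp t - 1) ^ ((n : ℝ) * δ) * exp (-A' * p * (exp t - 1) ^ δ) := fun t ht =>
    mul_pos (rpow_pos_of_pos (sub_pos.2 (one_lt_exp_iff.2 ht)) _) (exp_pos _)
  rw [psi, setIntegral_pos_iff_support_of_nonneg_ae
    ((ae_restrict_iff' measurableSet_Ioi).2 (.of_forall fun t ht => (hpos t ht).le))
    (integrableOn_rpow_exp_sub_one_mul_exp (by nlinarith) (by positivity) hδ)]
  refine lt_of_lt_of_le ?_ (measure_mono fun t ht => ⟨(hpos t ht).ne', ht⟩)
  simp

theorem hasDerivAt_psi {A' δ p : ℝ} (n : ℕ) (hA : 0 < A') (hδ : 0 < δ) (hp : 0 < p) :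
    HasDerivAt (psi A' δ n) (-A' * psi A' δ (n + 1) p) p := by
  set F : ℝ → ℝ → ℝ := fun x t =>
    (exp t - 1) ^ ((n : ℝ) * δ) * exp (-A' * x * (exp t - 1) ^ δ)
  set F' : ℝ → ℝ → ℝ := fun x t =>
    -A' * ((exp t - 1) ^ (((n + 1 : ℕ) : ℝ) * δ) * exp (-A' * x * (exp t - 1) ^ δ))
  have hF_meas : ∀ x, AEStronglyMeasurable (F x) (volume.restrict (Ioi 0)) := fun x =>
    (continuous_rpow_exp_sub_one_mul_exp (by positivity) hδ.le).aestronglyMeasurable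
  have hF_int : IntegrableOn (F p) (Ioi 0) :=
    integrableOn_rpow_exp_sub_one_mul_exp (by nlinarith) (by positivity) hδ
  have h_bound : ∀ᵐ t ∂volume.restrict (Ioi 0), ∀ x ∈ Ioi (p / 2),
      ‖F' x t‖ ≤ A' * ((exp t - 1) ^ (((n + 1 : ℕ) : ℝ) * δ) *
        exp (-A' * (p / 2) * (exp t - 1) ^ δ)) := by
    refine (ae_restrict_iff' measurableSet_Ioi).2 (.of_forall fun t ht x hx => ?_)
    have hu : 0 < exp t - 1 := sub_pos.2 (one_lt_exp_iff.2 ht)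
    rw [norm_mul, norm_neg, Real.norm_of_nonneg hA.le, Real.norm_of_nonneg (by positivity)]
    have hexp : exp (-A' * x * (exp t - 1) ^ δ) ≤ exp (-A' * (p / 2) * (exp t - 1) ^ δ) :=
      exp_le_exp.2 (by nlinarith [mul_pos (mul_pos hA (sub_pos.2 hx.out)) (rpow_pos_of_pos hu δ)])
    exact mul_le_mul_of_nonneg_left (mul_le_mul_of_nonneg_left hexp (by positivity)) hA.le
  have h_bound_int : IntegrableOn (fun t => (exp t - 1) ^ (((n + 1 : ℕ) : ℝ) * δ) *
      exp (-A' * (p / 2) * (exp t - 1) ^ δ)) (Ioi 0) :=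
    integrableOn_rpow_exp_sub_one_mul_exp (by nlinarith) (by positivity) hδ
  have h_diff : ∀ᵐ t ∂volume.restrict (Ioi 0), ∀ x ∈ Ioi (p / 2),
      HasDerivAt (F · t) (F' x t) x := by
    refine (ae_restrict_iff' measurableSet_Ioi).2 (.of_forall fun t ht x _ => ?_)
    have hu : 0 < exp t - 1 := sub_pos.2 (one_lt_exp_iff.2 ht)
    refine ((((hasDerivAt_id x).const_mul (-A')).mul_const ((exp t - 1) ^ δ)).exp.const_mul
      ((exp t - 1) ^ ((n : ℝ) * δ))).congr_deriv ?_
    simp only [F', id, Nat.cast_succ, add_mul, one_mul, mul_one, rpow_add hu]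
    ring
  have hF'_meas : AEStronglyMeasurable (F' p) (volume.restrict (Ioi 0)) :=
    (continuous_const.mul
      (continuous_rpow_exp_sub_one_mul_exp (by positivity) hδ.le)).aestronglyMeasurable
  have h := (hasDerivAt_integral_of_dominated_loc_of_deriv_le (Ioi_mem_nhds (half_lt_self hp))
    (.of_forall hF_meas) hF_int hF'_meas h_bound (h_bound_int.const_mul A') h_diff).2
  rwa [integral_const_mul] at h

theorem hasDerivAt_div_one_sub_rpow {γ x : ℝ} (hx : x < 1) :
    HasDerivAt (fun y => y / (1 - y) ^ γ) ((1 - x + γ * x) / (1 - x) ^ (γ + 1)) x := by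
  have hx' : 0 < 1 - x := sub_pos.2 hx
  refine ((hasDerivAt_id x).div (((hasDerivAt_id x).const_sub 1).rpow_const (.inl hx'.ne'))
    (rpow_pos_of_pos hx' γ).ne').congr_deriv ?_
  simp only [id, rpow_sub_one hx'.ne', rpow_add_one hx'.ne']
  field_simp
  ring

/-- For `A' > 0`, `δ ∈ (0,1)`, `τ > 0`, `K₀ > 0`, if `p* ∈ (0,1)` is a local maximum
of the utility `U(p) = K₀·p³·τ^δ·exp(−A'·p·τ^δ/(1−p)^(1−δ))·ψ₀(p)` on `(0,1)`, then
`3/(A'·p*) − τ^δ·(1 − p*·δ)/(1−p*)^(2−δ) = ψ₁(p*)/ψ₀(p*)`. -/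
theorem stmt_12 (A' δ τ K₀ : ℝ) (hA : 0 < A') (hδ : δ ∈ Set.Ioo (0 : ℝ) 1)
    (hτ : 0 < τ) (hK : 0 < K₀) (pstar : ℝ) (hps : pstar ∈ Set.Ioo (0 : ℝ) 1)
    (hmax : IsLocalMaxOn
      (fun p : ℝ => K₀ * p ^ 3 * τ ^ δ *
        Real.exp (-A' * p * τ ^ δ / (1 - p) ^ (1 - δ)) * psi A' δ 0 p)
      (Set.Ioo (0 : ℝ) 1) pstar) :
    3 / (A' * pstar) - τ ^ δ * (1 - pstar * δ) / (1 - pstar) ^ (2 - δ) =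
      psi A' δ 1 pstar / psi A' δ 0 pstar := by
  obtain ⟨hp0, hp1⟩ := hps
  have hexponent : HasDerivAt (fun p => -A' * p * τ ^ δ / (1 - p) ^ (1 - δ))
      (-A' * τ ^ δ * ((1 - pstar * δ) / (1 - pstar) ^ (2 - δ))) pstar := by
    have h := (hasDerivAt_div_one_sub_rpow (γ := 1 - δ) hp1).const_mul (-A' * τ ^ δ)
    rw [show 1 - δ + 1 = 2 - δ by ring,
      show 1 - pstar + (1 - δ) * pstar = 1 - pstar * δ by ring] at h
    exact h.congr_of_eventuallyEq (.of_forall fun p => by ring)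
  have hU := ((((hasDerivAt_pow 3 pstar).const_mul K₀).mul_const (τ ^ δ)).mul
    hexponent.exp).mul (hasDerivAt_psi 0 hA hδ.1 hp0)
  have hcrit := (hmax.isLocalMax (Ioo_mem_nhds hp0 hp1)).hasDerivAt_eq_zero hU
  simp only [Pi.mul_apply, zero_add, Nat.cast_ofNat] at hcrit
  set E := exp (-A' * pstar * τ ^ δ / (1 - pstar) ^ (1 - δ))
  set D := (1 - pstar) ^ (2 - δ)
  have hD : D ≠ 0 := (rpow_pos_of_pos (sub_pos.2 hp1) _).ne'
  have hψ := (psi_pos 0 hA hδ.1 hp0).ne'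
  have hfactor : K₀ * τ ^ δ * E * pstar ^ 2 / D *
      ((3 * D - A' * pstar * τ ^ δ * (1 - pstar * δ)) * psi A' δ 0 pstar -
        A' * pstar * D * psi A' δ 1 pstar) = 0 := by
    rw [← hcrit]
    field_simp
    ring
  have hstationary := (mul_eq_zero.1 hfactor).resolve_left (by positivity)
  field_simp
  linear_combination hstationary
end
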